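/- Let d ≥ 1 and let q ∈ ℂ be such that 1 + q·c ≠ 0 for every integer c with 1 ≤ |c| ≤ d−1 (equivalently, q is not one of the points ±1/1, ±1/2, …, ±1/(d−1)). Then the d!×d! complex matrix with rows and columns indexed by permutations of {1,…,d} and entries q^{d−c(ρ⁻¹σ)} is invertible, where c(π) denotes the number of cycles of π and the convention 0^0 = 1 is used. -/

import Mathlib

open MeasureTheory Matrix

namespace HCIZ

noncomputable instance (N : ℕ) : MeasurableSpace (Matrix (Fin N) (Fin N) ℂ) := borel _

instance (N : ℕ) : BorelSpace (Matrix (Fin N) (Fin N) ℂ) := ⟨rfl⟩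

/-- The number of cycles of a permutation (fixed points counted as cycles). -/
def cycleCount {d : ℕ} (π : Equiv.Perm (Fin d)) : ℕ := π.partition.parts.card

/-- `π` has cycle type `α` (1-cycles included). -/
def HasCycleType {d : ℕ} (π : Equiv.Perm (Fin d)) (α : d.Partition) : Prop :=
  π.partition.parts = α.parts

/-- The tuple `τ` consists of transpositions `(s_i t_i)`, `s_i < t_i`, with
`t_1 ≤ t_2 ≤ ⋯` (monotone condition). -/
def IsMonotoneTuple {d r : ℕ} (τ : Fin r → Equiv.Perm (Fin d)) : Prop :=
  (∀ i, (τ i).IsSwap) ∧ Monotone fun i => (τ i).support.max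

/-- The subgroup generated by `s` acts transitively on `Fin d`. -/
def GeneratesTransitively {d : ℕ} (s : Set (Equiv.Perm (Fin d))) : Prop :=
  ∀ x y : Fin d, ∃ g ∈ Subgroup.closure s, g x = y

/-- `H⃗^r(α,β)`: the number of monotone transitive factorizations of the identity
into `ρ σ τ_1 ⋯ τ_r` with `ρ` of cycle type `α` and `σ` of cycle type `β`. -/
noncomputable def Hr (d : ℕ) (α β : d.Partition) (r : ℕ) : ℕ :=
  Nat.card {T : Equiv.Perm (Fin d) × Equiv.Perm (Fin d) × (Fin r → Equiv.Perm (Fin d)) //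
    HasCycleType T.1 α ∧ HasCycleType T.2.1 β ∧ IsMonotoneTuple T.2.2 ∧
    T.1 * T.2.1 * (List.ofFn T.2.2).prod = 1 ∧
    GeneratesTransitively ({T.1, T.2.1} ∪ Set.range T.2.2)}

/-- `H̃^r(α,β)`: the same count without the transitivity requirement. -/
noncomputable def Hnt (d : ℕ) (α β : d.Partition) (r : ℕ) : ℕ :=
  Nat.card {T : Equiv.Perm (Fin d) × Equiv.Perm (Fin d) × (Fin r → Equiv.Perm (Fin d)) //
    HasCycleType T.1 α ∧ HasCycleType T.2.1 β ∧ IsMonotoneTuple T.2.2 ∧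
    T.1 * T.2.1 * (List.ofFn T.2.2).prod = 1}

/-- The monotone double Hurwitz number `H⃗_g(α,β) = H⃗^r(α,β)`,
`r = 2g - 2 + ℓ(α) + ℓ(β)`. -/
noncomputable def Hg (d g : ℕ) (α β : d.Partition) : ℕ :=
  Hr d α β (2 * g + α.parts.card + β.parts.card - 2)

/-- `m_r(π)`: monotone (not necessarily transitive) factorizations of `π`
into `r` transpositions. -/
noncomputable def mcount (d r : ℕ) (π : Equiv.Perm (Fin d)) : ℕ :=
  Nat.card {τ : Fin r → Equiv.Perm (Fin d) //
    IsMonotoneTuple τ ∧ (List.ofFn τ).prod = π}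

/-- Power sum `p_α(A) = ∏ Tr(A^{α_i})`. -/
noncomputable def pPoly {N : ℕ} (A : Matrix (Fin N) (Fin N) ℂ) {d : ℕ} (α : d.Partition) : ℂ :=
  (α.parts.map fun k => (A ^ k).trace).prod

/-- `φ_α = ∏ φ_{α_i}`. -/
noncomputable def momProd (Φ : ℕ → ℂ) {d : ℕ} (α : d.Partition) : ℂ :=
  (α.parts.map Φ).prod

/-- `C_{g,d}(A,B) = ∑_{α,β ⊢ d} (-1)^{d+ℓ(α)+ℓ(β)} H⃗_g(α,β)
(N^{-ℓ(α)} p_α(A)) (N^{-ℓ(β)} p_β(B))`. -/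
noncomputable def Cmat {N : ℕ} (g d : ℕ) (A B : Matrix (Fin N) (Fin N) ℂ) : ℂ :=
  ∑ α : d.Partition, ∑ β : d.Partition,
    (-1 : ℂ) ^ (d + α.parts.card + β.parts.card) * (Hg d g α β : ℂ) *
      (((N : ℂ) ^ α.parts.card)⁻¹ * pPoly A α) * (((N : ℂ) ^ β.parts.card)⁻¹ * pPoly B β)

/-- `C_{g,d}(Φ,Ψ) = ∑_{α,β ⊢ d} (-1)^{d+ℓ(α)+ℓ(β)} H⃗_g(α,β) φ_α ψ_β`. -/
noncomputable def Cseq (g d : ℕ) (Φ Ψ : ℕ → ℂ) : ℂ :=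
  ∑ α : d.Partition, ∑ β : d.Partition,
    (-1 : ℂ) ^ (d + α.parts.card + β.parts.card) * (Hg d g α β : ℂ) *
      momProd Φ α * momProd Ψ β

/-- The HCIZ integral `I_N(z;A,B)` with respect to a measure `μ` on `U(N)`. -/
noncomputable def hciz {N : ℕ} (μ : Measure (Matrix.unitaryGroup (Fin N) ℂ))
    (A B : Matrix (Fin N) (Fin N) ℂ) (z : ℂ) : ℂ :=
  ∫ U : Matrix.unitaryGroup (Fin N) ℂ,
    Complex.exp (-(z * (N : ℂ) *
      (A * (U : Matrix (Fin N) (Fin N) ℂ) * B *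
        ((U⁻¹ : Matrix.unitaryGroup (Fin N) ℂ) : Matrix (Fin N) (Fin N) ℂ)).trace)) ∂μ

/-- A free-energy branch for `I_N(·;A,B)` on the disc `D(0,ε)`: a holomorphic
function `F` with `F 0 = 0` and `exp (N² F z) = I_N(z;A,B)` on the disc. -/
def IsFreeEnergyBranch {N : ℕ} (μ : Measure (Matrix.unitaryGroup (Fin N) ℂ))
    (A B : Matrix (Fin N) (Fin N) ℂ) (ε : ℝ) (F : ℂ → ℂ) : Prop :=
  DifferentiableOn ℂ F (Metric.ball 0 ε) ∧ F 0 = 0 ∧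
    ∀ z ∈ Metric.ball (0 : ℂ) ε, Complex.exp ((N : ℂ) ^ 2 * F z) = hciz μ A B z

/-- The L² operator norm of a matrix. -/
noncomputable def opNorm {N : ℕ} (A : Matrix (Fin N) (Fin N) ℂ) : ℝ :=
  ‖Matrix.toEuclideanCLM (𝕜 := ℂ) A‖

/-- The all-ones partition `(1^d)`. -/
def onesPartition (d : ℕ) : d.Partition :=
  ⟨Multiset.replicate d 1, fun {i} hi => by
    rw [Multiset.eq_of_mem_replicate hi]; exact one_pos, by simp⟩

/-- The partition `(2,1^{d-2})` of `d`, for `d ≥ 2`. -/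
def twoOnesPartition (d : ℕ) (hd : 2 ≤ d) : d.Partition :=
  ⟨2 ::ₘ Multiset.replicate (d - 2) 1, fun {i} hi => by
    rcases Multiset.mem_cons.mp hi with h | h
    · omega
    · rw [Multiset.eq_of_mem_replicate h]; exact one_pos, by
    simp [Multiset.sum_cons]; omega⟩


/-- The `q`-distance matrix `[q^{d - c(ρ⁻¹σ)}]` of the Cayley graph of `S(d)`
with respect to the class of all transpositions. -/
noncomputable def qDistanceMatrix (d : ℕ) (q : ℂ) :
    Matrix (Equiv.Perm (Fin d)) (Equiv.Perm (Fin d)) ℂ :=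
  Matrix.of fun ρ σ => q ^ (d - cycleCount (ρ⁻¹ * σ))

end HCIZ

/-!
In the group algebra of `S(d)`, with the Jucys–Murphy elements `J_k = ∑_{i<k} (i k)`,
`∑_π q^{d - c(π)} π = (1 + q J_0)(1 + q J_1) ⋯ (1 + q J_{d-1})`:
every permutation is uniquely a product `(i_0 0)(i_1 1) ⋯ (i_{d-1} d-1)` with `i_k ≤ k`, and each
factor with `i_k < k` merges a fixed point into a cycle, lowering the cycle count by one. The
`q`-distance matrix is the image of this element in the right regular representation.

The `J_k` commute, and `s J_{k+1} = J_k s + 1` for `s = (k k+1)`. Hence every eigenvalue of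
`J_{k+1}` is within `1` of an eigenvalue of `J_k`, so by induction the eigenvalues of `J_k` are
integers `c` with `|c| ≤ k`, and `1 + q J_k` is invertible unless `1 + q c = 0` for one of them.
-/

open Finset Equiv

theorem Nat.Partition.card_parts_le {n : ℕ} (p : n.Partition) : p.parts.card ≤ n := by
  simpa [p.parts_sum] using Multiset.card_nsmul_le_sum (a := 1) fun _ hi => p.parts_pos hi

namespace Equiv.Perm

variable {α : Type*} [Fintype α] [DecidableEq α]

theorem card_parts_partition_mul_add_card_support {τ c : Perm α} (hc : c.IsCycle)
    (h : τ.Disjoint c) :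
    (τ * c).partition.parts.card + #c.support = τ.partition.parts.card + 1 := by
  have hle : #(τ * c).support ≤ Fintype.card α := card_le_univ _
  simp only [parts_partition, Multiset.card_add, Multiset.card_replicate, h.cycleType_mul,
    hc.cycleType, Multiset.card_singleton] at hle ⊢
  rw [h.card_support_mul] at hle ⊢
  omega

theorem IsCycle.mul_swap {c : Perm α} (hc : c.IsCycle) {a b : α} (ha : a ∈ c.support)
    (hb : b ∉ c.support) :
    (c * swap a b).IsCycle ∧ (c * swap a b).support = insert b c.support := by
  set c' := c * swap a b
  have hab : a ≠ b := by rintro rfl; exact hb ha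
  have hc'a : c' a = b := by simp [c', notMem_support.1 hb]
  have hc'b : c' b = c a := by simp [c']
  have hc'_of_ne {y : α} (hya : y ≠ a) (hyb : y ≠ b) : c' y = c y := by
    simp [c', swap_apply_of_ne_of_ne hya hyb]
  have hcab : c a ≠ b := fun h => hb (h ▸ apply_mem_support.2 ha)
  have hsupport : c'.support = insert b c.support := by
    ext y
    by_cases hyb : y = b
    · simp [hyb, hc'b, hcab]
    by_cases hya : y = a
    · simp [hya, hc'a, hab.symm, ha]
    · simp [hc'_of_ne hya hyb, hyb]
  -- `c'` runs through the orbit of `a` under `c`, with `b` inserted after `a`.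
  have horbit (n : ℕ) : c'.SameCycle b ((c ^ n) a) := by
    induction n with
    | zero =>
      have hba : c'.SameCycle a b := hc'a ▸ sameCycle_apply_right.2 (SameCycle.refl c' a)
      simpa using hba.symm
    | succ n ih =>
      rw [pow_succ', Perm.mul_apply]
      by_cases hn : (c ^ n) a = a
      · rw [hn, ← hc'b]; exact sameCycle_apply_right.2 (SameCycle.refl _ _)
      · have hnb : (c ^ n) a ≠ b := fun h => hb (h ▸ pow_apply_mem_support.2 ha)
        rw [← hc'_of_ne hn hnb]
        exact sameCycle_apply_right.2 ih
  refine ⟨⟨b, by rw [hc'b]; exact hcab, fun y hy => ?_⟩, hsupport⟩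
  rcases mem_insert.1 (hsupport ▸ mem_support.2 hy) with rfl | hy
  · exact SameCycle.refl _ _
  · obtain ⟨n, -, rfl⟩ := (hc.sameCycle (mem_support.1 ha) (mem_support.1 hy)).exists_pow_eq'
    exact horbit n

theorem card_parts_partition_mul_swap {σ : Perm α} {a b : α} (hab : a ≠ b) (hb : σ b = b) :
    (σ * swap a b).partition.parts.card + 1 = σ.partition.parts.card := by
  by_cases ha : σ a = a
  · have hdisj : σ.Disjoint (swap a b) := fun x => by
      by_cases hxa : x = a
      · exact .inl (hxa ▸ ha)
      by_cases hxb : x = b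
      · exact .inl (hxb ▸ hb)
      exact .inr (swap_apply_of_ne_of_ne hxa hxb)
    have := card_parts_partition_mul_add_card_support (isCycle_swap hab) hdisj
    rw [card_support_swap hab] at this
    omega
  · -- `σ = (σ * c⁻¹) * c` for the cycle `c` through `a`; `c * swap a b` absorbs the fixed point `b`
    set c := σ.cycleOf a
    have hc : c.IsCycle := isCycle_cycleOf σ ha
    have hac : a ∈ c.support := mem_support_cycleOf_iff.2 ⟨SameCycle.refl _ _, mem_support.2 ha⟩
    have hbc : b ∉ c.support := fun h => mem_support.1 (support_cycleOf_le σ a h) hb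
    have hτ : (σ * c⁻¹).Disjoint c :=
      disjoint_mul_inv_of_mem_cycleFactorsFinset (cycleOf_mem_cycleFactorsFinset_iff.2
        (mem_support.2 ha))
    obtain ⟨hc', hsupp⟩ := hc.mul_swap hac hbc
    have hbτ : b ∉ (σ * c⁻¹).support := by
      rw [mem_support, not_not, Perm.mul_apply, inv_eq_iff_eq.2 (notMem_support.1 hbc).symm, hb]
    have hτ' : (σ * c⁻¹).Disjoint (c * swap a b) := by
      rw [disjoint_iff_disjoint_support, hsupp, Finset.disjoint_insert_right]
      exact ⟨hbτ, disjoint_iff_disjoint_support.1 hτ⟩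
    have h₁ := card_parts_partition_mul_add_card_support hc hτ
    have h₂ := card_parts_partition_mul_add_card_support hc' hτ'
    rw [inv_mul_cancel_right] at h₁
    rw [← mul_assoc, inv_mul_cancel_right, hsupp, card_insert_of_notMem hbc] at h₂
    omega

end Equiv.Perm

section RightRegular

variable (R : Type*) [Semiring R] {G : Type*} [Group G] [Fintype G] [DecidableEq G]

def Matrix.rightRegular : G →* Matrix G G R where
  toFun g := (Equiv.mulRight g).permMatrix R
  map_one' := by simp
  map_mul' g h := by
    rw [← Matrix.permMatrix_mul]
    congr 1
    ext x
    simp [mul_assoc]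

variable {R}

theorem Matrix.rightRegular_apply (g ρ σ : G) :
    rightRegular R g ρ σ = if ρ * g = σ then 1 else 0 := by
  simp [rightRegular]

theorem Matrix.sum_smul_rightRegular (w : G → R) :
    ∑ g, w g • rightRegular R g = of fun ρ σ => w (ρ⁻¹ * σ) := by
  ext ρ σ
  simp [Matrix.sum_apply, rightRegular_apply, ← eq_inv_mul_iff_mul_eq]

end RightRegular

section JucysMurphy

variable (R : Type*) [Semiring R] {d : ℕ}

noncomputable def jucysMurphy (k : Fin d) : Matrix (Perm (Fin d)) (Perm (Fin d)) R :=
  ∑ i ∈ Iio k, rightRegular R (swap i k)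

variable {R}

theorem rightRegular_mul_rightRegular_swap {α : Type*} [Fintype α] [DecidableEq α]
    (π : Perm α) (i k : α) :
    rightRegular R π * rightRegular R (swap i k) =
      rightRegular R (swap (π i) (π k)) * rightRegular R π := by
  rw [← map_mul, ← map_mul, mul_swap_eq_swap_mul]

theorem commute_rightRegular_jucysMurphy {π : Perm (Fin d)} {k : Fin d}
    (hπ : ∀ j, k ≤ j → π j = j) : Commute (rightRegular R π) (jucysMurphy R k) := by
  have hIio : {i | π i ≠ i} ⊆ (Iio k : Set (Fin d)) := fun i hi =>
    mem_coe.2 (mem_Iio.2 (lt_of_not_ge fun h => hi (hπ i h)))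
  simp only [Commute, SemiconjBy, jucysMurphy, mul_sum, sum_mul,
    rightRegular_mul_rightRegular_swap, hπ k le_rfl]
  exact π.sum_comp _ (fun i => rightRegular R (swap i k) * rightRegular R π) hIio

theorem commute_jucysMurphy (j k : Fin d) : Commute (jucysMurphy R j) (jucysMurphy R k) := by
  wlog hjk : j < k generalizing j k
  · rcases (not_lt.1 hjk).eq_or_lt with rfl | hkj
    · exact Commute.refl _
    · exact (this k j hkj).symm
  refine Commute.sum_left _ _ _ fun i hi => commute_rightRegular_jucysMurphy fun l hl => ?_
  have := (mem_Iio.1 hi).trans hjk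
  exact swap_apply_of_ne_of_ne (by omega) (by omega)

theorem rightRegular_swap_mul_jucysMurphy {j k : Fin d} (hjk : (j : ℕ) + 1 = k) :
    rightRegular R (swap j k) * jucysMurphy R k =
      jucysMurphy R j * rightRegular R (swap j k) + 1 := by
  have hIio : Iio k = insert j (Iio j) := by
    ext i; simp only [mem_Iio, mem_insert, Fin.lt_def, Fin.ext_iff]; omega
  have hconj : ∀ i ∈ Iio j, rightRegular R (swap j k) * rightRegular R (swap i k) =
      rightRegular R (swap i j) * rightRegular R (swap j k) := fun i hi => by
    have := mem_Iio.1 hi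
    rw [rightRegular_mul_rightRegular_swap, swap_apply_right,
      swap_apply_of_ne_of_ne (by omega) (by omega)]
  rw [jucysMurphy, hIio, sum_insert (by simp), mul_add, ← map_mul, Equiv.swap_mul_self, map_one,
    mul_sum, sum_congr rfl hconj, ← sum_mul, jucysMurphy, add_comm]

end JucysMurphy

namespace Module.End

variable {K V : Type*} [Field K] [AddCommGroup V] [Module K V] [FiniteDimensional K V]

theorem exists_hasEigenvector_of_commute [IsAlgClosed K] {A T : End K V} (hAT : Commute A T)
    {μ : K} (hμ : T.HasEigenvalue μ) : ∃ b v, A.HasEigenvector b v ∧ T.HasEigenvector μ v := by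
  have hmaps : Set.MapsTo A (T.eigenspace μ) (T.eigenspace μ) := by
    simpa using mapsTo_genEigenspace_of_comm hAT.symm μ 1
  have : Nontrivial (T.eigenspace μ) := Submodule.nontrivial_iff_ne_bot.2 hμ
  obtain ⟨b, hb⟩ := exists_eigenvalue (A.restrict hmaps)
  obtain ⟨v, hv⟩ := hb.exists_hasEigenvector
  refine ⟨b, v, ⟨mem_eigenspace_iff.2 ?_, ?_⟩, v.2, ?_⟩
  · exact congrArg Subtype.val hv.apply_eq_smul
  all_goals simpa using hv.2

theorem HasEigenvalue.exists_hasEigenvalue_of_mul_eq_mul_add_one [IsAlgClosed K]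
    {A T S : End K V} (hS : S * S = 1) (hST : S * T = A * S + 1) (hAT : Commute A T) {μ : K}
    (hμ : T.HasEigenvalue μ) : ∃ b, A.HasEigenvalue b ∧ (μ = b - 1 ∨ μ = b ∨ μ = b + 1) := by
  obtain ⟨b, v, hAv, hTv⟩ := exists_hasEigenvector_of_commute hAT hμ
  by_cases hμb : μ = b
  · exact ⟨b, hasEigenvalue_of_hasEigenvector hAv, .inr (.inl hμb)⟩
  have hASv : A (S v) = μ • S v - v := by
    have := congr($hST v)
    rw [mul_apply, hTv.apply_eq_smul, map_smul, LinearMap.add_apply, mul_apply, one_apply] at this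
    rw [this, add_sub_cancel_right]
  -- `u = S v - t • v` satisfies `A u = μ • u`; if `u = 0`, then `S * S = 1` forces `t * t = 1`.
  set t := (μ - b)⁻¹
  have ht : t * (μ - b) = 1 := inv_mul_cancel₀ (sub_ne_zero.2 hμb)
  by_cases hu : S v - t • v = 0
  · have hSv : S v = t • v := sub_eq_zero.1 hu
    have hvv : (t * t) • v = (1 : K) • v := by
      rw [mul_smul, ← hSv, ← map_smul, ← hSv, ← mul_apply, hS, one_apply, one_smul]
    have htt : t * t = 1 := smul_left_injective K hAv.2 hvv
    refine ⟨b, hasEigenvalue_of_hasEigenvector hAv, ?_⟩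
    have : (μ - (b - 1)) * (μ - (b + 1)) = 0 := by
      linear_combination (-(μ - b) ^ 2) * htt + (t * (μ - b) + 1) * ht
    rcases mul_eq_zero.1 this with h | h
    · exact .inl (sub_eq_zero.1 h)
    · exact .inr (.inr (sub_eq_zero.1 h))
  · refine ⟨μ, hasEigenvalue_of_hasEigenvector ⟨mem_eigenspace_iff.2 ?_, hu⟩, .inr (.inl rfl)⟩
    rw [map_sub, map_smul, hASv, hAv.apply_eq_smul, smul_sub, smul_smul, smul_smul, sub_sub,
      show μ * t = 1 + t * b by linear_combination ht, add_smul, one_smul]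

end Module.End

section Spectrum

variable {K : Type*} [Field K] {n : Type*} [Fintype n] [DecidableEq n]

theorem Matrix.exists_mem_spectrum_of_mul_eq_mul_add_one [IsAlgClosed K]
    {A T S : Matrix n n K} (hS : S * S = 1) (hST : S * T = A * S + 1) (hAT : Commute A T)
    {μ : K} (hμ : μ ∈ spectrum K T) :
    ∃ b ∈ spectrum K A, μ = b - 1 ∨ μ = b ∨ μ = b + 1 := by
  let e := Matrix.toLinAlgEquiv' (R := K) (n := n)
  simp only [← AlgEquiv.spectrum_eq e, ← Module.End.hasEigenvalue_iff_mem_spectrum] at hμ ⊢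
  exact hμ.exists_hasEigenvalue_of_mul_eq_mul_add_one (S := e S)
    (by rw [← map_mul, hS, map_one]) (by rw [← map_mul, hST, map_add, map_mul, map_one])
    (hAT.map e)

theorem isUnit_one_add_smul_of_spectrum {A : Type*} [Ring A] [Algebra K A] {a : A} {q : K}
    (h : ∀ μ ∈ spectrum K a, 1 + q * μ ≠ 0) : IsUnit (1 + q • a) := by
  by_cases hq : q = 0
  · simp [hq]
  have hmem : -q⁻¹ ∉ spectrum K a := fun hm => h _ hm (by field_simp; ring)
  rw [spectrum.mem_iff, not_not] at hmem
  have : 1 + q • a = algebraMap K A (-q) * (algebraMap K A (-q⁻¹) - a) := by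
    rw [mul_sub, ← map_mul, neg_mul_neg, mul_inv_cancel₀ hq, map_one, ← Algebra.smul_def,
      neg_smul, sub_neg_eq_add]
  rw [this]
  exact ((isUnit_iff_ne_zero.2 (neg_ne_zero.2 hq)).map _).mul hmem

variable {d : ℕ}

theorem exists_int_of_mem_spectrum_jucysMurphy [IsAlgClosed K] (k : Fin d) {μ : K}
    (hμ : μ ∈ spectrum K (jucysMurphy K k)) : ∃ c : ℤ, μ = c ∧ c.natAbs ≤ k := by
  obtain ⟨m, hm⟩ : ∃ m, (k : ℕ) = m := ⟨_, rfl⟩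
  induction m generalizing k μ with
  | zero =>
    have : jucysMurphy K k = 0 := by
      rw [jucysMurphy, sum_eq_zero]
      intro i hi
      have := mem_Iio.1 hi
      omega
    rw [this, spectrum.zero_eq, Set.mem_singleton_iff] at hμ
    exact ⟨0, by simp [hμ], by simp⟩
  | succ m ih =>
    set j : Fin d := ⟨m, by omega⟩
    have hjk : (j : ℕ) + 1 = k := hm.symm
    obtain ⟨b, hb, hμb⟩ := Matrix.exists_mem_spectrum_of_mul_eq_mul_add_one
      (by rw [← map_mul, Equiv.swap_mul_self, map_one]) (rightRegular_swap_mul_jucysMurphy hjk)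
      (commute_jucysMurphy j k) hμ
    obtain ⟨c, rfl, hc⟩ := ih j hb rfl
    rcases hμb with rfl | rfl | rfl
    · exact ⟨c - 1, by push_cast; ring, by omega⟩
    · exact ⟨c, rfl, by omega⟩
    · exact ⟨c + 1, by push_cast; ring, by omega⟩

end Spectrum

namespace HCIZ

open Equiv.Perm

section

variable {d : ℕ}

theorem cycleCount_le (σ : Perm (Fin d)) : cycleCount σ ≤ d :=
  σ.partition.card_parts_le.trans_eq (Fintype.card_fin d)

theorem cycleCount_one : cycleCount (1 : Perm (Fin d)) = d := by
  simp [cycleCount, parts_partition]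

theorem sub_cycleCount_mul_swap {σ : Perm (Fin d)} {a b : Fin d} (hab : a ≠ b) (hb : σ b = b) :
    d - cycleCount (σ * swap a b) = d - cycleCount σ + 1 := by
  have h : cycleCount (σ * swap a b) + 1 = cycleCount σ := card_parts_partition_mul_swap hab hb
  have := cycleCount_le σ
  omega

def lowerPerms (d m : ℕ) : Finset (Perm (Fin d)) := {π | ∀ j : Fin d, m ≤ j → π j = j}

@[simp]
theorem mem_lowerPerms {m : ℕ} {π : Perm (Fin d)} :
    π ∈ lowerPerms d m ↔ ∀ j : Fin d, m ≤ j → π j = j := by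
  simp [lowerPerms]

theorem lowerPerms_zero : lowerPerms d 0 = {1} := by
  ext π
  simp [lowerPerms, Perm.ext_iff]

theorem lowerPerms_self : lowerPerms d d = univ := by
  ext π
  simp [lowerPerms, Fin.is_lt, not_le.2]

/-- The decomposition is `π = σ * swap i k` with `i = π⁻¹ k`; `swap i k` is its own inverse. -/
theorem sum_lowerPerms_succ {M : Type*} [AddCommMonoid M] (f : Perm (Fin d) → M) (k : Fin d) :
    ∑ π ∈ lowerPerms d (k + 1), f π = ∑ σ ∈ lowerPerms d k, ∑ i ∈ Iic k, f (σ * swap i k) := by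
  have hmaps : ∀ π ∈ lowerPerms d (k + 1), π⁻¹ k ∈ Iic k := fun π hπ => by
    by_contra h
    have hk : k < π⁻¹ k := not_le.1 (by simpa using h)
    exact hk.ne (by simpa using mem_lowerPerms.1 hπ _ hk)
  rw [← sum_fiberwise_of_maps_to hmaps, sum_comm]
  refine sum_congr rfl fun i hi => ?_
  have hik : i ≤ k := mem_Iic.1 hi
  refine sum_nbij' (· * swap i k) (· * swap i k) ?_ ?_ (fun π _ => mul_swap_mul_self i k π)
    (fun σ _ => mul_swap_mul_self i k σ) fun π _ => by rw [mul_swap_mul_self]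
  · intro σ hσ
    obtain ⟨hσ, hσk⟩ := mem_filter.1 hσ
    have hσi : σ i = k := by rw [← hσk]; exact σ.apply_symm_apply k
    refine mem_lowerPerms.2 fun j hj => ?_
    rcases hj.eq_or_lt with hjk | hjk
    · obtain rfl : j = k := Fin.ext hjk.symm
      rw [Perm.mul_apply, swap_apply_right, hσi]
    · have hkj : k < j := Fin.lt_def.2 hjk
      rw [Perm.mul_apply, swap_apply_of_ne_of_ne (hik.trans_lt hkj).ne' hkj.ne',
        mem_lowerPerms.1 hσ j hjk]
  · intro π hπ
    have hπk : π k = k := mem_lowerPerms.1 hπ k le_rfl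
    refine mem_filter.2 ⟨mem_lowerPerms.2 fun j hj => ?_, ?_⟩
    · have hkj : k < j := Fin.lt_def.2 hj
      rw [Perm.mul_apply, swap_apply_of_ne_of_ne (hik.trans_lt hkj).ne' hkj.ne',
        mem_lowerPerms.1 hπ j hkj.le]
    · rw [_root_.mul_inv_rev, swap_inv, Perm.mul_apply, inv_eq_iff_eq.2 hπk.symm, swap_apply_right]

variable (K : Type*) [Field K]

noncomputable def qDistancePartial (d : ℕ) (q : K) (m : ℕ) :
    Matrix (Perm (Fin d)) (Perm (Fin d)) K :=
  ∑ π ∈ lowerPerms d m, q ^ (d - cycleCount π) • rightRegular K π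

variable {K}

theorem qDistancePartial_succ (q : K) (k : Fin d) :
    qDistancePartial K d q (k + 1) = qDistancePartial K d q k * (1 + q • jucysMurphy K k) := by
  rw [qDistancePartial, sum_lowerPerms_succ, qDistancePartial, sum_mul]
  refine sum_congr rfl fun σ hσ => ?_
  have hσk : σ k = k := mem_lowerPerms.1 hσ k le_rfl
  rw [← Iio_insert, sum_insert notMem_Iio_self, swap_self, ← Perm.one_def, mul_one, mul_add,
    mul_one, jucysMurphy, smul_sum, mul_sum]
  congr 1
  refine sum_congr rfl fun i hi => ?_
  rw [sub_cycleCount_mul_swap (mem_Iio.1 hi).ne hσk, pow_succ, map_mul, smul_mul_smul_comm]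

theorem isUnit_one_add_smul_jucysMurphy [IsAlgClosed K] {q : K} (k : Fin d)
    (hq : ∀ c : ℤ, c ≠ 0 → c.natAbs ≤ k → 1 + q * c ≠ 0) :
    IsUnit (1 + q • jucysMurphy K k) :=
  isUnit_one_add_smul_of_spectrum fun μ hμ => by
    obtain ⟨c, rfl, hc⟩ := exists_int_of_mem_spectrum_jucysMurphy k hμ
    rcases eq_or_ne c 0 with rfl | hc0
    · simp
    · exact hq c hc0 hc

theorem isUnit_qDistancePartial [IsAlgClosed K] {q : K}
    (hq : ∀ c : ℤ, c ≠ 0 → c.natAbs ≤ d - 1 → 1 + q * c ≠ 0) {m : ℕ} (hm : m ≤ d) :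
    IsUnit (qDistancePartial K d q m) := by
  induction m with
  | zero => simp [qDistancePartial, lowerPerms_zero, cycleCount_one]
  | succ m ih =>
    let k : Fin d := ⟨m, hm⟩
    rw [show m + 1 = (k : ℕ) + 1 from rfl, qDistancePartial_succ]
    exact (ih (by omega)).mul
      (isUnit_one_add_smul_jucysMurphy k fun c hc0 hc => hq c hc0 (by omega))

theorem qDistancePartial_self (q : ℂ) : qDistancePartial ℂ d q d = qDistanceMatrix d q := by
  rw [qDistancePartial, lowerPerms_self, sum_smul_rightRegular]
  rfl

end

theorem qDistanceMatrix_invertible_general (d : ℕ) (q : ℂ)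
    (hq : ∀ c : ℤ, c ≠ 0 → c.natAbs ≤ d - 1 → (1 : ℂ) + q * (c : ℂ) ≠ 0) :
    IsUnit (qDistanceMatrix d q) := by
  rw [← qDistancePartial_self]
  exact isUnit_qDistancePartial hq le_rfl

/-- If `1 + qc ≠ 0` for every integer `c` with `1 ≤ |c| ≤ d - 1`, then the
matrix `[q^{d-c(ρ⁻¹σ)}]` is invertible. -/
theorem qDistanceMatrix_invertible (d : ℕ) (hd : 1 ≤ d) (q : ℂ)
    (hq : ∀ c : ℤ, c ≠ 0 → c.natAbs ≤ d - 1 → (1 : ℂ) + q * (c : ℂ) ≠ 0) :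
    IsUnit (qDistanceMatrix d q) :=
  qDistanceMatrix_invertible_general d q hq

end HCIZ
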